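/- (Theorem 1, decay.) Set h_τ := [‖u(0)‖ + ∫_0^τ (α(ξ)·ν(ξ)·‖u(ξ−τ)‖^p + β(ξ)·ν(ξ)) dξ]/ν(τ). Assume α(t) > 0 for all t ≥ τ, the improper integral I := ∫_τ^∞ α(ξ)·σ(ξ)^p·ν(ξ)^{1−p} dξ converges, ω := sup_{t ≥ τ} (β(t)/α(t))^{1/p}·exp(−∫_0^{t−τ} γ(ξ) dξ) is finite, positive, and satisfies ω < ((p−1)·I)^{−1/(p−1)} − h_τ·ν(τ), and additionally lim_{t→∞} ∫_0^t γ(ξ) dξ = −∞. Then lim_{t→∞} ‖u(t)‖ = 0. -/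

import Mathlib

open Real MeasureTheory Set Filter ComplexInnerProductSpace

/-- `ν(t) = exp(−∫₀ᵗ γ(ξ) dξ)`. -/
noncomputable def nu (γ : ℝ → ℝ) (t : ℝ) : ℝ := Real.exp (-∫ ξ in (0:ℝ)..t, γ ξ)

/-- `σ(t) = exp(−∫_{t−τ}^t γ(ξ) dξ)`. -/
noncomputable def sig (γ : ℝ → ℝ) (τ t : ℝ) : ℝ :=
  Real.exp (-∫ ξ in (t - τ)..t, γ ξ)

/-!
Multiplying by `ν` removes the linear term `γ`: `h ν` has derivative `ν (α h(t - τ) ^ p + β) ≥ 0`,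
and the same computation for `‖u‖ ν` lets a fencing argument on `[nτ, (n + 1)τ]` (method of
steps) give `‖u‖ ≤ h`. On `[τ, ∞)` the function `z = h ν + ω` satisfies `z' ≤ φ z ^ p` with
`φ = α σ ^ p ν ^ (1 - p)`, because `h ν` is nondecreasing and `β ≤ α (ω / ν(t - τ)) ^ p`.
The Bernoulli substitution `z ^ (1 - p)` linearises this inequality, and the smallness of `ω`
keeps `z(τ) ^ (1 - p) - (p - 1) I` positive, so `h ν ≤ M`. Hence
`‖u t‖ ≤ M / ν t = M exp (∫₀ᵗ γ) → 0`.
-/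

theorem norm_mul_eq_re_inner_of_hasDerivWithinAt (𝕜 : Type*) {E : Type*} [RCLike 𝕜]
    [NormedAddCommGroup E] [InnerProductSpace 𝕜 E] [NormedSpace ℝ E]
    {u : ℝ → E} {u' : E} {v' : ℝ} {s : Set ℝ} {t : ℝ} (hs : UniqueDiffWithinAt ℝ s t)
    (hu : HasDerivWithinAt u u' s t) (hv : HasDerivWithinAt (‖u ·‖) v' s t) :
    ‖u t‖ * v' = RCLike.re (inner 𝕜 (u t) u') := by
  have hsq : HasDerivWithinAt (fun x => RCLike.re (inner 𝕜 (u x) (u x)))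
      (RCLike.re (inner 𝕜 (u t) u' + inner 𝕜 u' (u t))) s t :=
    (RCLike.reCLM.hasFDerivAt.comp_hasDerivWithinAt t (hu.inner 𝕜 hu) :)
  simp only [inner_self_eq_norm_sq, map_add, inner_re_symm u' (u t)] at hsq
  have hv2 : HasDerivWithinAt (fun x => ‖u x‖ ^ 2) (2 * ‖u t‖ * v') s t := by
    simpa using hv.fun_pow 2
  linarith [hs.eq_deriv _ hsq hv2]

theorem le_of_re_inner_le_norm_mul (𝕜 : Type*) {E : Type*} [RCLike 𝕜]
    [NormedAddCommGroup E] [InnerProductSpace 𝕜 E] [NormedSpace ℝ E]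
    {u : ℝ → E} {u' : E} {v' c : ℝ} {s : Set ℝ} {t : ℝ} (hs : UniqueDiffWithinAt ℝ s t)
    (hu : HasDerivWithinAt u u' s t) (hv : HasDerivWithinAt (‖u ·‖) v' s t)
    (hpos : 0 < ‖u t‖) (hle : RCLike.re (inner 𝕜 (u t) u') ≤ ‖u t‖ * c) : v' ≤ c :=
  le_of_mul_le_mul_left ((norm_mul_eq_re_inner_of_hasDerivWithinAt 𝕜 hs hu hv).trans_le hle) hpos

theorem image_le_of_deriv_right_le_deriv_boundary_of_lt {f f' B B' : ℝ → ℝ} {a b : ℝ}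
    (hf : ContinuousOn f (Icc a b)) (hf' : ∀ x ∈ Ico a b, HasDerivWithinAt f (f' x) (Ici x) x)
    (ha : f a ≤ B a) (hB : ContinuousOn B (Icc a b))
    (hB' : ∀ x ∈ Ico a b, HasDerivWithinAt B (B' x) (Ici x) x)
    (bound : ∀ x ∈ Ico a b, B x < f x → f' x ≤ B' x) : ∀ ⦃x⦄, x ∈ Icc a b → f x ≤ B x := by
  intro x hx
  have hlen : 0 < 1 + (x - a) := by linarith [hx.1]
  -- the barrier `B + ε (1 + (y - a))` lies strictly above `B` and grows strictly faster
  have fence : ∀ ε > 0, f x ≤ B x + ε * (1 + (x - a)) := fun ε hε =>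
    image_le_of_deriv_right_lt_deriv_boundary' (B := fun y => B y + ε * (1 + (y - a)))
      (B' := fun y => B' y + ε) hf hf' (by linarith) (hB.add (by fun_prop))
      (fun y hy => by
        simpa using (hB' y hy).fun_add
          ((((hasDerivWithinAt_id y _).sub_const a).const_add 1).const_mul ε))
      (fun y hy hfy => by
        linarith [bound y hy (by nlinarith [hy.1])]) hx
  refine le_of_forall_pos_le_add fun ε hε => ?_
  simpa [div_mul_cancel₀ _ hlen.ne'] using fence (ε / (1 + (x - a))) (by positivity)

theorem lt_rpow_one_sub_of_lt_rpow_neg_inv {p c x : ℝ} (hp : 1 < p) (hx : 0 < x)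
    (hxc : x < c ^ (-(1 / (p - 1)))) : c < x ^ (1 - p) := by
  rcases le_or_gt c 0 with hc | hc
  · exact hc.trans_lt (rpow_pos_of_pos hx _)
  · have := rpow_lt_rpow_of_neg hx hxc (by linarith : 1 - p < 0)
    rwa [← rpow_mul hc.le, show -(1 / (p - 1)) * (1 - p) = 1 by
      field_simp [(sub_pos.2 hp).ne']; ring, rpow_one] at this

section Bernoulli

variable {p a : ℝ} {z z' φ : ℝ → ℝ}

theorem rpow_one_sub_sub_integral_le_of_deriv_le (hp : 1 ≤ p) (hφ : Continuous φ)
    (hzc : ContinuousOn z (Ici a)) (hz : ∀ t, a ≤ t → 0 < z t)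
    (hzd : ∀ t, a < t → HasDerivWithinAt z (z' t) (Ioi a) t)
    (hbound : ∀ t, a < t → z' t ≤ φ t * z t ^ p) {t : ℝ} (ht : a ≤ t) :
    z a ^ (1 - p) - (p - 1) * ∫ ξ in a..t, φ ξ ≤ z t ^ (1 - p) := by
  have hmono : MonotoneOn (fun t => z t ^ (1 - p) + (p - 1) * ∫ ξ in a..t, φ ξ) (Ici a) := by
    refine monotoneOn_of_hasDerivWithinAt_nonneg (convex_Ici a)
      (f' := fun x => z' x * (1 - p) * z x ^ (1 - p - 1) + (p - 1) * φ x)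
      ((hzc.rpow_const fun x hx => Or.inl (hz x hx).ne').add
        (continuous_const.mul (intervalIntegral.continuous_primitive
          (fun _ _ => hφ.intervalIntegrable _ _) a)).continuousOn) (fun x hx => ?_) (fun x hx => ?_)
    · rw [interior_Ici] at hx ⊢
      exact ((hzd x hx).rpow_const (Or.inl (hz x hx.le).ne')).add
        ((hφ.integral_hasStrictDerivAt a x).hasDerivAt.const_mul (p - 1)).hasDerivWithinAt
    · rw [interior_Ici] at hx
      have hzx := hz x hx.le
      have hφx : z' x * z x ^ (-p) ≤ φ x :=
        calc z' x * z x ^ (-p) ≤ φ x * z x ^ p * z x ^ (-p) :=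
              mul_le_mul_of_nonneg_right (hbound x hx) (rpow_nonneg hzx.le _)
          _ = φ x := by rw [mul_assoc, ← rpow_add hzx, add_neg_cancel, rpow_zero, mul_one]
      rw [show 1 - p - 1 = -p by ring]
      nlinarith
  simpa using hmono (le_refl a) ht ht

theorem le_rpow_of_deriv_le_mul_rpow (hp : 1 < p) (hφ : Continuous φ)
    (hzc : ContinuousOn z (Ici a)) (hz : ∀ t, a ≤ t → 0 < z t)
    (hzd : ∀ t, a < t → HasDerivWithinAt z (z' t) (Ioi a) t)
    (hbound : ∀ t, a < t → z' t ≤ φ t * z t ^ p) {K : ℝ}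
    (hK : ∀ t, a ≤ t → (p - 1) * ∫ ξ in a..t, φ ξ ≤ K) (hKz : K < z a ^ (1 - p))
    {t : ℝ} (ht : a ≤ t) : z t ≤ (z a ^ (1 - p) - K) ^ (1 / (1 - p)) := by
  have hle : z a ^ (1 - p) - K ≤ z t ^ (1 - p) := by
    linarith [hK t ht, rpow_one_sub_sub_integral_le_of_deriv_le hp.le hφ hzc hz hzd hbound ht]
  have hp1 : 1 - p < 0 := by linarith
  have := rpow_le_rpow_of_nonpos (sub_pos.2 hKz) hle (one_div_neg.2 hp1).le
  rwa [← rpow_mul (hz t ht).le, mul_one_div_cancel hp1.ne, rpow_one] at this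

end Bernoulli

section Nu

variable {γ : ℝ → ℝ}

theorem nu_pos (γ : ℝ → ℝ) (t : ℝ) : 0 < nu γ t := exp_pos _

theorem nu_zero (γ : ℝ → ℝ) : nu γ 0 = 1 := by simp [nu]

theorem hasDerivAt_nu (hγ : Continuous γ) (t : ℝ) : HasDerivAt (nu γ) (-γ t * nu γ t) t :=
  ((hγ.integral_hasStrictDerivAt 0 t).hasDerivAt.fun_neg.exp).congr_deriv
    (by rw [nu]; ring)

theorem continuous_nu (hγ : Continuous γ) : Continuous (nu γ) :=
  continuous_iff_continuousAt.2 fun t => (hasDerivAt_nu hγ t).continuousAt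

theorem sig_eq_nu_div (hγ : Continuous γ) (τ t : ℝ) : sig γ τ t = nu γ t / nu γ (t - τ) := by
  rw [sig, nu, nu, ← exp_sub, ← intervalIntegral.integral_interval_sub_left
    (hγ.intervalIntegrable 0 t) (hγ.intervalIntegrable 0 (t - τ))]
  ring_nf

theorem HasDerivWithinAt.mul_nu (hγ : Continuous γ) {f : ℝ → ℝ} {f' : ℝ} {s : Set ℝ} {t : ℝ}
    (hf : HasDerivWithinAt f f' s t) :
    HasDerivWithinAt (fun x => f x * nu γ x) (nu γ t * (f' - γ t * f t)) s t :=
  (hf.mul (hasDerivAt_nu hγ t).hasDerivWithinAt).congr_deriv (by ring)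

end Nu

section DelayEquation

variable {τ p : ℝ} {γ α β h h' : ℝ → ℝ}

theorem hasDerivWithinAt_mul_nu_of_delay (hγ : Continuous γ)
    (hhd : ∀ t, 0 ≤ t → HasDerivWithinAt h (h' t) (Ici 0) t)
    (hheq : ∀ t, 0 ≤ t → h' t = γ t * h t + α t * h (t - τ) ^ p + β t) {t : ℝ} (ht : 0 ≤ t) :
    HasDerivWithinAt (fun x => h x * nu γ x) (nu γ t * (α t * h (t - τ) ^ p + β t)) (Ici 0) t :=
  ((hhd t ht).mul_nu hγ).congr_deriv (by rw [hheq t ht]; ring)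

theorem continuousOn_mul_nu_of_delay (hγ : Continuous γ)
    (hhd : ∀ t, 0 ≤ t → HasDerivWithinAt h (h' t) (Ici 0) t)
    (hheq : ∀ t, 0 ≤ t → h' t = γ t * h t + α t * h (t - τ) ^ p + β t) :
    ContinuousOn (fun t => h t * nu γ t) (Ici 0) :=
  fun _ ht => (hasDerivWithinAt_mul_nu_of_delay hγ hhd hheq ht).continuousWithinAt

theorem le_on_Icc_add_of_delay_comparison (hp : 0 ≤ p) (hγ : Continuous γ)
    (hα : ∀ t, 0 ≤ α t) {v v' : ℝ → ℝ} (hv0 : ∀ t, 0 ≤ v t)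
    (hvd : ∀ t, 0 ≤ t → HasDerivWithinAt v (v' t) (Ici 0) t)
    (hvineq : ∀ t, 0 ≤ t → 0 < v t → v' t ≤ γ t * v t + α t * v (t - τ) ^ p + β t)
    (hh0 : ∀ t, -τ ≤ t → 0 ≤ h t) (hhd : ∀ t, 0 ≤ t → HasDerivWithinAt h (h' t) (Ici 0) t)
    (hheq : ∀ t, 0 ≤ t → h' t = γ t * h t + α t * h (t - τ) ^ p + β t) {a : ℝ} (ha : 0 ≤ a)
    (hle : ∀ s ∈ Icc (-τ) a, v s ≤ h s) : ∀ s ∈ Icc a (a + τ), v s ≤ h s := by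
  intro s hs
  have hsub : Icc a (a + τ) ⊆ Ici 0 := fun x hx => ha.trans hx.1
  have hright : ∀ x ∈ Ico a (a + τ), Ici x ⊆ Ici 0 := fun x hx => Ici_subset_Ici.2 (ha.trans hx.1)
  refine le_of_mul_le_mul_right ?_ (nu_pos γ s)
  refine image_le_of_deriv_right_le_deriv_boundary_of_lt (f := fun x => v x * nu γ x)
    (B := fun x => h x * nu γ x)
    (fun x hx => ((hvd x (hsub hx)).mul_nu hγ).continuousWithinAt.mono hsub)
    (fun x hx => ((hvd x (ha.trans hx.1)).mul_nu hγ).mono (hright x hx))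
    (mul_le_mul_of_nonneg_right (hle a ⟨by linarith [hs.1, hs.2], le_rfl⟩) (nu_pos γ a).le)
    ((continuousOn_mul_nu_of_delay hγ hhd hheq).mono hsub)
    (fun x hx => (hasDerivWithinAt_mul_nu_of_delay hγ hhd hheq (ha.trans hx.1)).mono
      (hright x hx))
    (fun x hx hlt => ?_) hs
  have hhv : h x < v x := lt_of_mul_lt_mul_right hlt (nu_pos γ x).le
  have hdelay : v (x - τ) ^ p ≤ h (x - τ) ^ p :=
    rpow_le_rpow (hv0 _) (hle _ ⟨by linarith [hx.1], by linarith [hx.2]⟩) hp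
  have hv'x := hvineq x (ha.trans hx.1) (by linarith [hh0 x (by linarith [hx.1, hx.2])])
  refine mul_le_mul_of_nonneg_left ?_ (nu_pos γ x).le
  nlinarith [mul_le_mul_of_nonneg_left hdelay (hα x)]

theorem le_of_delay_comparison (hτ : 0 < τ) (hp : 0 ≤ p) (hγ : Continuous γ)
    (hα : ∀ t, 0 ≤ α t) {v v' : ℝ → ℝ} (hv0 : ∀ t, 0 ≤ v t)
    (hvd : ∀ t, 0 ≤ t → HasDerivWithinAt v (v' t) (Ici 0) t)
    (hvineq : ∀ t, 0 ≤ t → 0 < v t → v' t ≤ γ t * v t + α t * v (t - τ) ^ p + β t)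
    (hh0 : ∀ t, -τ ≤ t → 0 ≤ h t) (hhd : ∀ t, 0 ≤ t → HasDerivWithinAt h (h' t) (Ici 0) t)
    (hheq : ∀ t, 0 ≤ t → h' t = γ t * h t + α t * h (t - τ) ^ p + β t)
    (hinit : ∀ t, -τ ≤ t → t ≤ 0 → v t ≤ h t) :
    ∀ t, -τ ≤ t → v t ≤ h t := by
  have hsteps : ∀ n : ℕ, ∀ s ∈ Icc (-τ) (n * τ), v s ≤ h s := by
    intro n
    induction n with
    | zero => exact fun s hs => hinit s hs.1 (by simpa using hs.2)
    | succ n ih =>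
      intro s hs
      rcases le_or_gt s (n * τ) with hsn | hsn
      · exact ih s ⟨hs.1, hsn⟩
      · exact le_on_Icc_add_of_delay_comparison hp hγ hα hv0 hvd hvineq hh0 hhd hheq
          (by positivity) ih s ⟨hsn.le, by push_cast at hs; linarith [hs.2]⟩
  intro t ht
  obtain ⟨n, hn⟩ := exists_nat_ge (t / τ)
  exact hsteps n t ⟨ht, (div_le_iff₀ hτ).1 hn⟩

theorem monotoneOn_mul_nu_of_delay (hγ : Continuous γ) (hα : ∀ t, 0 ≤ α t)
    (hβ : ∀ t, 0 ≤ β t) (hh0 : ∀ t, -τ ≤ t → 0 ≤ h t)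
    (hhd : ∀ t, 0 ≤ t → HasDerivWithinAt h (h' t) (Ici 0) t)
    (hheq : ∀ t, 0 ≤ t → h' t = γ t * h t + α t * h (t - τ) ^ p + β t) :
    MonotoneOn (fun t => h t * nu γ t) (Ici 0) := by
  refine monotoneOn_of_hasDerivWithinAt_nonneg (convex_Ici 0)
    (f' := fun x => nu γ x * (α x * h (x - τ) ^ p + β x))
    (continuousOn_mul_nu_of_delay hγ hhd hheq) (fun x hx => ?_) (fun x hx => ?_)
  all_goals rw [interior_Ici] at hx
  · rw [interior_Ici]
    exact (hasDerivWithinAt_mul_nu_of_delay hγ hhd hheq hx.le).mono Ioi_subset_Ici_self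
  · have hx' : -τ ≤ x - τ := by linarith [mem_Ioi.1 hx]
    exact mul_nonneg (nu_pos γ x).le
      (add_nonneg (mul_nonneg (hα x) (rpow_nonneg (hh0 _ hx') p)) (hβ x))

theorem mul_nu_eq_add_integral_of_delay (hp : 0 ≤ p) (hγ : Continuous γ) (hα : Continuous α)
    (hβ : Continuous β) (hhc : ContinuousOn h (Ici (-τ)))
    (hhd : ∀ t, 0 ≤ t → HasDerivWithinAt h (h' t) (Ici 0) t)
    (hheq : ∀ t, 0 ≤ t → h' t = γ t * h t + α t * h (t - τ) ^ p + β t) {t : ℝ} (ht : 0 ≤ t) :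
    h t * nu γ t = h 0 + ∫ ξ in (0:ℝ)..t, nu γ ξ * (α ξ * h (ξ - τ) ^ p + β ξ) := by
  have hdelay : ContinuousOn (fun ξ => h (ξ - τ)) (Icc 0 t) :=
    hhc.comp (continuous_sub_right τ).continuousOn fun ξ hξ => by
      simp only [mem_Ici]; linarith [hξ.1]
  rw [intervalIntegral.integral_eq_sub_of_hasDeriv_right_of_le (f := fun x => h x * nu γ x) ht
    ((continuousOn_mul_nu_of_delay hγ hhd hheq).mono Icc_subset_Ici_self)
    (fun x hx => (hasDerivWithinAt_mul_nu_of_delay hγ hhd hheq hx.1.le).mono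
      (Ici_subset_Ici.2 hx.1.le |>.trans' Ioi_subset_Ici_self))
    (((continuous_nu hγ).continuousOn.mul ((hα.continuousOn.mul
      (hdelay.rpow_const fun _ _ => Or.inr hp)).add hβ.continuousOn)).intervalIntegrable_of_Icc ht),
    nu_zero, mul_one]
  ring

theorem nu_mul_delay_rhs_le (hγ : Continuous γ) (hp : 1 ≤ p) {t ω : ℝ} (hαt : 0 < α t)
    (hβt : 0 ≤ β t) (hh : 0 ≤ h (t - τ)) (hω : 0 ≤ ω)
    (hmono : h (t - τ) * nu γ (t - τ) ≤ h t * nu γ t)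
    (hβω : (β t / α t) ^ (1 / p) * nu γ (t - τ) ≤ ω) :
    nu γ t * (α t * h (t - τ) ^ p + β t) ≤
      α t * sig γ τ t ^ p * nu γ t ^ (1 - p) * (h t * nu γ t + ω) ^ p := by
  set m := nu γ (t - τ)
  set n := nu γ t
  set y := h t * n
  have hm : 0 < m := nu_pos γ _
  have hn : 0 < n := nu_pos γ _
  have hy : 0 ≤ y := (mul_nonneg hh hm.le).trans hmono
  have hp0 : 0 ≤ p := by linarith
  have hdelay : h (t - τ) ^ p ≤ (y / m) ^ p := rpow_le_rpow hh ((le_div_iff₀ hm).2 hmono) hp0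
  have hβ : β t ≤ α t * (ω / m) ^ p := by
    have hβα : 0 ≤ β t / α t := div_nonneg hβt hαt.le
    have := rpow_le_rpow (rpow_nonneg hβα _) ((le_div_iff₀ hm).2 hβω) hp0
    rw [← rpow_mul hβα, one_div_mul_cancel (by linarith), rpow_one, div_le_iff₀ hαt] at this
    linarith
  have hnn : n ^ p * n ^ (1 - p) = n := by rw [← rpow_add hn]; simp
  calc n * (α t * h (t - τ) ^ p + β t)
      ≤ n * α t * ((y / m) ^ p + (ω / m) ^ p) := by
        nlinarith [mul_le_mul_of_nonneg_left hdelay hαt.le]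
    _ ≤ n * α t * (y / m + ω / m) ^ p := by
        gcongr
        exact add_rpow_le_rpow_add (by positivity) (by positivity) hp
    _ = α t * sig γ τ t ^ p * n ^ (1 - p) * (y + ω) ^ p := by
        rw [sig_eq_nu_div hγ, ← add_div, div_rpow (by positivity) hm.le,
          div_rpow hn.le hm.le]
        nth_rw 1 [← hnn]
        ring

theorem exists_bound_mul_nu_of_delay (hτ : 0 < τ) (hp : 1 < p) (hγ : Continuous γ)
    (hαc : Continuous α) (hα : ∀ t, 0 ≤ α t) (hβ : ∀ t, 0 ≤ β t)
    (hαpos : ∀ t, τ ≤ t → 0 < α t) (hh0 : ∀ t, -τ ≤ t → 0 ≤ h t)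
    (hhd : ∀ t, 0 ≤ t → HasDerivWithinAt h (h' t) (Ici 0) t)
    (hheq : ∀ t, 0 ≤ t → h' t = γ t * h t + α t * h (t - τ) ^ p + β t)
    (hint : IntegrableOn (fun ξ => α ξ * sig γ τ ξ ^ p * nu γ ξ ^ (1 - p)) (Ici τ))
    {ω : ℝ} (hω : ∀ t, τ ≤ t → (β t / α t) ^ (1 / p) * nu γ (t - τ) ≤ ω) (hω0 : 0 < ω)
    (hlt : h τ * nu γ τ + ω <
      ((p - 1) * ∫ ξ in Ici τ, α ξ * sig γ τ ξ ^ p * nu γ ξ ^ (1 - p)) ^ (-(1 / (p - 1)))) :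
    ∃ M, ∀ t, τ ≤ t → h t * nu γ t ≤ M := by
  set φ := fun ξ => α ξ * sig γ τ ξ ^ p * nu γ ξ ^ (1 - p)
  set z := fun t => h t * nu γ t + ω
  have hτ0 : Ici τ ⊆ Ici 0 := Ici_subset_Ici.2 hτ.le
  have hφ0 : ∀ ξ, 0 ≤ φ ξ := fun ξ =>
    mul_nonneg (mul_nonneg (hα ξ) (rpow_nonneg (exp_pos _).le _)) (rpow_nonneg (nu_pos γ ξ).le _)
  have hφc : Continuous φ := by
    have hsig : Continuous (sig γ τ) := by
      simp only [funext (sig_eq_nu_div hγ τ)]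
      exact (continuous_nu hγ).div ((continuous_nu hγ).comp (continuous_sub_right τ))
        fun t => (nu_pos γ _).ne'
    exact (hαc.mul (hsig.rpow_const fun t => Or.inl (exp_pos _).ne')).mul
      ((continuous_nu hγ).rpow_const fun t => Or.inl (nu_pos γ t).ne')
  have hz : ∀ t, τ ≤ t → 0 < z t := fun t ht =>
    add_pos_of_nonneg_of_pos (mul_nonneg (hh0 t (by linarith)) (nu_pos γ t).le) hω0
  have hmono := monotoneOn_mul_nu_of_delay hγ hα hβ hh0 hhd hheq
  have hbound : ∀ t, τ < t → nu γ t * (α t * h (t - τ) ^ p + β t) ≤ φ t * z t ^ p :=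
    fun t ht => nu_mul_delay_rhs_le hγ hp.le (hαpos t ht.le) (hβ t) (hh0 _ (by linarith))
      hω0.le (hmono (by simp only [mem_Ici]; linarith) (hτ0 ht.le) (by linarith)) (hω t ht.le)
  have hK : ∀ t, τ ≤ t → (p - 1) * ∫ ξ in τ..t, φ ξ ≤ (p - 1) * ∫ ξ in Ici τ, φ ξ := by
    intro t ht
    rw [intervalIntegral.integral_of_le ht]
    exact mul_le_mul_of_nonneg_left (setIntegral_mono_set hint (Eventually.of_forall hφ0)
      (Ioc_subset_Icc_self.trans Icc_subset_Ici_self).eventuallyLE) (by linarith)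
  exact ⟨_, fun t ht => (le_add_of_nonneg_right hω0.le).trans
    (le_rpow_of_deriv_le_mul_rpow hp hφc
      (((continuousOn_mul_nu_of_delay hγ hhd hheq).mono hτ0).add continuousOn_const) hz
      (fun t ht => (((hasDerivWithinAt_mul_nu_of_delay hγ hhd hheq (hτ.le.trans ht.le)).mono
        (Ioi_subset_Ici_self.trans hτ0)).add_const ω)) hbound hK
      (lt_rpow_one_sub_of_lt_rpow_neg_inv hp (hz τ le_rfl) hlt) ht)⟩

end DelayEquation

theorem stmt_10_general
    {H : Type*} [NormedAddCommGroup H] [InnerProductSpace ℂ H]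
    (τ p : ℝ) (hτ : 0 < τ) (hp : 1 < p)
    (γ α β : ℝ → ℝ)
    (hγc : Continuous γ) (hαc : Continuous α) (hβc : Continuous β)
    (hα : ∀ t, 0 ≤ α t) (hβ : ∀ t, 0 ≤ β t)
    (u : ℝ → H) (u' : ℝ → H)
    (hud : ∀ t, 0 ≤ t → HasDerivWithinAt u (u' t) (Ici (0:ℝ)) t)
    (hnd : ∀ t, 0 ≤ t → DifferentiableWithinAt ℝ (fun s => ‖u s‖) (Ici (0:ℝ)) t)
    (huineq : ∀ t, 0 ≤ t → (⟪u t, u' t⟫).re ≤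
      γ t * ‖u t‖ ^ 2 + α t * ‖u t‖ * ‖u (t - τ)‖ ^ p + β t * ‖u t‖)
    (h h' : ℝ → ℝ)
    (hh0 : ∀ t, -τ ≤ t → 0 ≤ h t)
    (hhc : ContinuousOn h (Ici (-τ)))
    (hhd : ∀ t, 0 ≤ t → HasDerivWithinAt h (h' t) (Ici (0:ℝ)) t)
    (hheq : ∀ t, 0 ≤ t → h' t = γ t * h t + α t * h (t - τ) ^ p + β t)
    (hinit : ∀ t, -τ ≤ t → t ≤ 0 → h t = ‖u t‖)
    (hτv : ℝ)
    (hτvdef : hτv = (‖u 0‖ + ∫ ξ in (0:ℝ)..τ,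
        (α ξ * nu γ ξ * ‖u (ξ - τ)‖ ^ p + β ξ * nu γ ξ)) / nu γ τ)
    (hαpos : ∀ t, τ ≤ t → 0 < α t)
    (I : ℝ)
    (hint : IntegrableOn (fun ξ => α ξ * sig γ τ ξ ^ p * nu γ ξ ^ (1 - p)) (Ici τ))
    (hI : I = ∫ ξ in Ici τ, α ξ * sig γ τ ξ ^ p * nu γ ξ ^ (1 - p))
    (ω : ℝ)
    (hω : IsLUB {x : ℝ | ∃ t, τ ≤ t ∧
        x = (β t / α t) ^ (1 / p) * Real.exp (-∫ ξ in (0:ℝ)..(t - τ), γ ξ)} ω)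
    (hωpos : 0 < ω)
    (hωlt : ω < ((p - 1) * I) ^ (-(1 / (p - 1))) - hτv * nu γ τ)
    (hγlim : Tendsto (fun t => ∫ ξ in (0:ℝ)..t, γ ξ) atTop atBot) :
    Tendsto (fun t => ‖u t‖) atTop (nhds 0) := by
  have hcomp : ∀ t, -τ ≤ t → ‖u t‖ ≤ h t :=
    le_of_delay_comparison hτ (by linarith) hγc hα (fun t => norm_nonneg _)
      (fun t ht => (hnd t ht).hasDerivWithinAt)
      (fun t ht hpos => le_of_re_inner_le_norm_mul ℂ (uniqueDiffOn_Ici 0 t ht) (hud t ht)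
        (hnd t ht).hasDerivWithinAt hpos (by rw [RCLike.re_to_complex]; linarith [huineq t ht]))
      hh0 hhd hheq fun t h₁ h₂ => (hinit t h₁ h₂).ge
  have hhτ : h τ * nu γ τ = hτv * nu γ τ := by
    rw [hτvdef, div_mul_cancel₀ _ (nu_pos γ τ).ne', mul_nu_eq_add_integral_of_delay (by linarith)
      hγc hαc hβc hhc hhd hheq hτ.le, hinit 0 (by linarith) le_rfl]
    congr 1
    refine intervalIntegral.integral_congr fun ξ hξ => ?_
    rw [uIcc_of_le hτ.le] at hξ
    simp only [hinit (ξ - τ) (by linarith [hξ.1]) (by linarith [hξ.2])]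
    ring
  obtain ⟨M, hM⟩ := exists_bound_mul_nu_of_delay hτ hp hγc hαc hα hβ hαpos hh0 hhd hheq hint
    (fun t ht => hω.1 ⟨t, ht, rfl⟩) hωpos (by rw [hhτ, ← hI]; linarith)
  have hdecay : Tendsto (fun t => M * exp (∫ ξ in (0:ℝ)..t, γ ξ)) atTop (nhds 0) := by
    simpa using (tendsto_exp_atBot.comp hγlim).const_mul M
  refine squeeze_zero' (Eventually.of_forall fun t => norm_nonneg _) ?_ hdecay
  filter_upwards [eventually_ge_atTop τ] with t ht
  calc ‖u t‖ ≤ h t := hcomp t (by linarith)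
    _ ≤ M / nu γ t := (le_div_iff₀ (nu_pos γ t)).2 (hM t ht)
    _ = M * exp (∫ ξ in (0:ℝ)..t, γ ξ) := by rw [nu, div_eq_mul_inv, ← exp_neg, neg_neg]

/-- Theorem 2.5 (Theorem 1), decay: if moreover `∫₀ᵗ γ → −∞` as `t → ∞`, then `‖u(t)‖ → 0`. -/
theorem stmt_10
    {H : Type*} [NormedAddCommGroup H] [InnerProductSpace ℂ H]
    (τ p : ℝ) (hτ : 0 < τ) (hp : 1 < p)
    (γ α β : ℝ → ℝ)
    (hγc : Continuous γ) (hαc : Continuous α) (hβc : Continuous β)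
    (hα : ∀ t, 0 ≤ α t) (hβ : ∀ t, 0 ≤ β t)
    (u : ℝ → H) (u' : ℝ → H)
    (huc : ContinuousOn u (Ici (-τ)))
    (hud : ∀ t, 0 ≤ t → HasDerivWithinAt u (u' t) (Ici (0:ℝ)) t)
    (hnd : ∀ t, 0 ≤ t → DifferentiableWithinAt ℝ (fun s => ‖u s‖) (Ici (0:ℝ)) t)
    (huineq : ∀ t, 0 ≤ t → (⟪u t, u' t⟫).re ≤
      γ t * ‖u t‖ ^ 2 + α t * ‖u t‖ * ‖u (t - τ)‖ ^ p + β t * ‖u t‖)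
    (h h' : ℝ → ℝ)
    (hh0 : ∀ t, -τ ≤ t → 0 ≤ h t)
    (hhc : ContinuousOn h (Ici (-τ)))
    (hhd : ∀ t, 0 ≤ t → HasDerivWithinAt h (h' t) (Ici (0:ℝ)) t)
    (hheq : ∀ t, 0 ≤ t → h' t = γ t * h t + α t * h (t - τ) ^ p + β t)
    (hinit : ∀ t, -τ ≤ t → t ≤ 0 → h t = ‖u t‖)
    (hτv : ℝ)
    (hτvdef : hτv = (‖u 0‖ + ∫ ξ in (0:ℝ)..τ,
        (α ξ * nu γ ξ * ‖u (ξ - τ)‖ ^ p + β ξ * nu γ ξ)) / nu γ τ)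
    (hαpos : ∀ t, τ ≤ t → 0 < α t)
    (I : ℝ)
    (hint : IntegrableOn (fun ξ => α ξ * sig γ τ ξ ^ p * nu γ ξ ^ (1 - p)) (Ici τ))
    (hI : I = ∫ ξ in Ici τ, α ξ * sig γ τ ξ ^ p * nu γ ξ ^ (1 - p))
    (ω : ℝ)
    (hω : IsLUB {x : ℝ | ∃ t, τ ≤ t ∧
        x = (β t / α t) ^ (1 / p) * Real.exp (-∫ ξ in (0:ℝ)..(t - τ), γ ξ)} ω)
    (hωpos : 0 < ω)
    (hωlt : ω < ((p - 1) * I) ^ (-(1 / (p - 1))) - hτv * nu γ τ)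
    (hγlim : Tendsto (fun t => ∫ ξ in (0:ℝ)..t, γ ξ) atTop atBot) :
    Tendsto (fun t => ‖u t‖) atTop (nhds 0) :=
  stmt_10_general τ p hτ hp γ α β hγc hαc hβc hα hβ u u' hud hnd huineq h h' hh0 hhc hhd hheq hinit
    hτv hτvdef hαpos I hint hI ω hω hωpos hωlt hγlim
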